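/- arXiv:1907.00674 — 3 statements merged into one kernel-verified Lean document; each statement's English description precedes it below -/
import Mathlib

section
/- For every integer i ≥ 1: m_{4i−3,j} = 0 for all 1 ≤ j ≤ i−1; m_{4i−1,j} = 0 for all 1 ≤ j ≤ i−1; and m_{4i,j} = 0 for all 1 ≤ j ≤ i. -/
def m : ℕ → ℕ → ℤ
  | 0, _ => 0
  | _, 0 => 0
  | 1, j => if j = 1 then 3 else 0
  | 2, j => if j = 1 then 2 else if j = 2 then 27 else 0
  | 3, j => if j = 1 then 1 else if j = 2 then 27 else if j = 3 then 243 else 0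
  | i + 4, j + 1 =>
    if i + 4 < j + 1 then 0
    else 9 * m (i + 3) j + 3 * m (i + 2) j + m (i + 1) j

theorem m_zero_right (n : ℕ) : m n 0 = 0 := by
  cases n <;> simp [m]

/-- Along the recursion `j` drops by one while `n` drops by at most three, ending at `m _ 0 = 0`. -/
theorem m_eq_zero_of_three_mul_lt {n j : ℕ} (h : 3 * j < n) : m n j = 0 := by
  induction j generalizing n with
  | zero => exact m_zero_right n
  | succ j ih =>
    obtain ⟨k, rfl⟩ : ∃ k, n = k + 4 := ⟨n - 4, by omega⟩
    simp only [m, ih (n := k + 3) (by omega), ih (n := k + 2) (by omega),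
      ih (n := k + 1) (by omega), mul_zero, add_zero, ite_self]

theorem m_vanishing_general (i : ℕ) :
    (∀ j, 1 ≤ j → j ≤ i - 1 → m (4 * i - 3) j = 0) ∧
      (∀ j, 1 ≤ j → j ≤ i - 1 → m (4 * i - 1) j = 0) ∧
      (∀ j, 1 ≤ j → j ≤ i → m (4 * i) j = 0) := by
  refine ⟨fun j hj hji => ?_, fun j hj hji => ?_, fun j hj hji => ?_⟩ <;>
    exact m_eq_zero_of_three_mul_lt (by omega)

theorem m_vanishing (i : ℕ) (hi : 1 ≤ i) :
    (∀ j, 1 ≤ j → j ≤ i - 1 → m (4 * i - 3) j = 0) ∧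
      (∀ j, 1 ≤ j → j ≤ i - 1 → m (4 * i - 1) j = 0) ∧
      (∀ j, 1 ≤ j → j ≤ i → m (4 * i) j = 0) :=
  m_vanishing_general i
end

section
/- For all integers i ≥ 1 and j ≥ 1 with 3j − i − 1 ≥ 0, the integer m_{i,j} is divisible by 3^{3j−i−1}; that is, the 3-adic valuation of m_{i,j} satisfies ν₃(m_{i,j}) ≥ 3j − i − 1 (with the understanding that this holds trivially when m_{i,j} = 0). -/
/-!
Each term `3^c · m_{i-k, j-1}` (`(c, k) = (2, 1), (1, 2), (0, 3)`) of the recurrence satisfies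
`c + k = 3`, so the exponent `3j - i - 1` drops by exactly `c` from `(i, j)` to `(i - k, j - 1)`
and the factor `3^c` makes up for it; the initial rows are checked directly.
-/

theorem pow_dvd_pow_mul_of_dvd {M : Type*} [CommMonoid M] {a x : M} {c e k : ℕ}
    (hx : a ^ e ∣ x) (hk : k ≤ e + c) : a ^ k ∣ a ^ c * x :=
  calc a ^ k ∣ a ^ (e + c) := pow_dvd_pow a hk
    _ = a ^ c * a ^ e := by rw [pow_add, mul_comm]
    _ ∣ a ^ c * x := mul_dvd_mul_left _ hx

theorem three_pow_dvd_m_of_le_three {i : ℕ} (hi : i ≤ 3) (j : ℕ) :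
    (3 : ℤ) ^ (3 * j - i - 1) ∣ m i j := by
  interval_cases i <;> rcases j with _ | _ | _ | _ | j <;> simp +arith [m]

theorem three_pow_dvd_m : ∀ i j : ℕ, (3 : ℤ) ^ (3 * j - i - 1) ∣ m i j
  | 0, j | 1, j | 2, j | 3, j => three_pow_dvd_m_of_le_three (by norm_num) j
  | _ + 4, 0 => by simp [m]
  | i + 4, j + 1 => by
    rw [m]
    split_ifs
    · exact dvd_zero _
    have h₁ : (3 : ℤ) ^ (3 * (j + 1) - (i + 4) - 1) ∣ 3 ^ 2 * m (i + 3) j :=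
      pow_dvd_pow_mul_of_dvd (three_pow_dvd_m (i + 3) j) (by omega)
    have h₂ : (3 : ℤ) ^ (3 * (j + 1) - (i + 4) - 1) ∣ 3 ^ 1 * m (i + 2) j :=
      pow_dvd_pow_mul_of_dvd (three_pow_dvd_m (i + 2) j) (by omega)
    have h₃ : (3 : ℤ) ^ (3 * (j + 1) - (i + 4) - 1) ∣ 3 ^ 0 * m (i + 1) j :=
      pow_dvd_pow_mul_of_dvd (three_pow_dvd_m (i + 1) j) (by omega)
    norm_num at h₁ h₂ h₃
    exact dvd_add (dvd_add h₁ h₂) h₃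

theorem m_valuation_general (i j : ℕ) :
    (3 : ℤ) ^ (3 * j - i - 1) ∣ m i j := three_pow_dvd_m i j

theorem m_valuation (i j : ℕ) (hi : 1 ≤ i) (hj : 1 ≤ j)
    (hij : i + 1 ≤ 3 * j) :
    (3 : ℤ) ^ (3 * j - i - 1) ∣ m i j :=
  m_valuation_general i j
end

section
/- For all integers α ≥ 0 and j ≥ 1: the integer x_{2α,j} is divisible by 3^{α+3j−4} whenever α + 3j − 4 ≥ 0, and the integer x_{2α+1,j} is divisible by 3^{α+3j−2}; that is, ν₃(x_{2α,j}) ≥ α + 3j − 4 and ν₃(x_{2α+1,j}) ≥ α + 1 + 3(j−1). -/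
def a (i j : ℕ) : ℤ := m (4 * i - 3) (i + j - 1)

def b (i j : ℕ) : ℤ := m (4 * i - 1) (i + j - 1)

def x : ℕ → ℕ → ℤ
  | 0, i => if i = 1 then 1 else 0
  | α + 1, j =>
    ∑ i ∈ Finset.Icc 1 (3 ^ α), x α i * (if α % 2 = 0 then a i j else b i j)

/-!
Row `i` of `m` has `ν₃(m i j) ≥ 3j - i - 1`: the recursion weights `9, 3, 1` sit at row offsets
`1, 2, 3`, so each step down four rows and right one column gains exactly `3³`. Transported to
the entries of `a` and `b`, this gives `ν₃(a i j) ≥ 3j - i - 1` and `ν₃(b i j) ≥ 3j - i - 3`.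
Since the bound on `x` grows by `3` per column while that on `a`, `b` loses only `1` per row,
the bounds on `x (2α) ·` and `x (2α+1) ·` propagate through the sums, by induction on `α`; only
for `x (2α+2) 1` is the bound on `b` too weak, and there `ν₃(b i 1) ≥ 0` suffices.
-/

open Finset

section Cancel

variable {R : Type*} [CommMonoidWithZero R] [IsCancelMulZero R] {p : R}

theorem pow_dvd_of_pow_add_dvd_pow_mul (hp : p ≠ 0) {n k : ℕ} {z : R}
    (h : p ^ (n + k) ∣ p ^ k * z) : p ^ n ∣ z := by
  rw [pow_add, mul_comm] at h
  exact (mul_dvd_mul_iff_left (pow_ne_zero k hp)).mp h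

-- `p ^ t ∣ p ^ k * v` encodes `ν(v) ≥ t - k`, a bound that may be negative.
theorem pow_dvd_mul_of_pow_dvd_of_pow_dvd_pow_mul (hp : p ≠ 0) {n k s t : ℕ} {u v : R}
    (hu : p ^ s ∣ u) (hv : p ^ t ∣ p ^ k * v) (hle : n + k ≤ s + t) : p ^ n ∣ u * v := by
  refine pow_dvd_of_pow_add_dvd_pow_mul hp (k := k) ?_
  calc p ^ (n + k) ∣ p ^ (s + t) := pow_dvd_pow p hle
    _ ∣ u * (p ^ k * v) := by rw [pow_add]; exact mul_dvd_mul hu hv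
    _ = p ^ k * (u * v) := mul_left_comm u _ _

end Cancel

theorem three_pow_dvd_three_pow_mul_m (i j : ℕ) : (3 : ℤ) ^ (3 * j) ∣ 3 ^ (i + 1) * m i j := by
  fun_induction m i j with
  | case13 i j _ ih₃ ih₂ ih₁ =>
    calc (3 : ℤ) ^ (3 * (j + 1)) = 3 ^ 3 * 3 ^ (3 * j) := by ring
      _ ∣ 3 ^ 3 * (3 ^ (i + 3 + 1) * m (i + 3) j + 3 ^ (i + 2 + 1) * m (i + 2) j
            + 3 ^ (i + 1 + 1) * m (i + 1) j) :=
        mul_dvd_mul_left _ (dvd_add (dvd_add ih₃ ih₂) ih₁)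
      _ = 3 ^ (i + 3 + 1 + 1) * (9 * m (i + 3) j + 3 * m (i + 2) j + m (i + 1) j) := by ring
  | _ => norm_num

theorem three_pow_dvd_three_pow_mul_a (i j : ℕ) : (3 : ℤ) ^ (3 * j) ∣ 3 ^ (i + 1) * a i j := by
  rcases i with _ | i
  · simp [a, m]
  have hm := three_pow_dvd_three_pow_mul_m (4 * i + 1) (i + j)
  rw [show 3 * (i + j) = 3 * j + 3 * i by ring, show 4 * i + 1 + 1 = 3 * i + (i + 1 + 1) by ring,
    pow_add 3 (3 * i), mul_assoc] at hm
  rw [a, show 4 * (i + 1) - 3 = 4 * i + 1 by omega, show i + 1 + j - 1 = i + j by omega]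
  exact pow_dvd_of_pow_add_dvd_pow_mul three_ne_zero hm

theorem three_pow_dvd_three_pow_mul_b (i j : ℕ) : (3 : ℤ) ^ (3 * j) ∣ 3 ^ (i + 3) * b i j := by
  rcases i with _ | i
  · simp [b, m]
  have hm := three_pow_dvd_three_pow_mul_m (4 * i + 3) (i + j)
  rw [show 3 * (i + j) = 3 * j + 3 * i by ring, show 4 * i + 3 + 1 = 3 * i + (i + 1 + 3) by ring,
    pow_add 3 (3 * i), mul_assoc] at hm
  rw [b, show 4 * (i + 1) - 1 = 4 * i + 3 by omega, show i + 1 + j - 1 = i + j by omega]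
  exact pow_dvd_of_pow_add_dvd_pow_mul three_ne_zero hm
theorem x_two_mul_add_one (α j : ℕ) :
    x (2 * α + 1) j = ∑ i ∈ Icc 1 (3 ^ (2 * α)), x (2 * α) i * a i j := by
  simp [x]

theorem x_two_mul_add_two (α j : ℕ) :
    x (2 * α + 2) j = ∑ i ∈ Icc 1 (3 ^ (2 * α + 1)), x (2 * α + 1) i * b i j := by
  simp [x, Nat.add_mod]

theorem three_pow_dvd_x_odd_of_even {α : ℕ}
    (heven : ∀ i, 1 ≤ i → (3 : ℤ) ^ (α + (3 * i - 4)) ∣ x (2 * α) i) {j : ℕ} (hj : 1 ≤ j) :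
    (3 : ℤ) ^ (α + 3 * j - 2) ∣ x (2 * α + 1) j := by
  rw [x_two_mul_add_one]
  refine dvd_sum fun i hi => ?_
  have hi₁ := (mem_Icc.mp hi).1
  exact pow_dvd_mul_of_pow_dvd_of_pow_dvd_pow_mul three_ne_zero (heven i hi₁)
    (three_pow_dvd_three_pow_mul_a i j) (by omega)

theorem three_pow_dvd_x_even_succ_of_odd {α : ℕ}
    (hodd : ∀ i, 1 ≤ i → (3 : ℤ) ^ (α + 3 * i - 2) ∣ x (2 * α + 1) i) {j : ℕ} (hj : 1 ≤ j) :
    (3 : ℤ) ^ (α + 1 + (3 * j - 4)) ∣ x (2 * α + 2) j := by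
  rw [x_two_mul_add_two]
  refine dvd_sum fun i hi => ?_
  have hi₁ := (mem_Icc.mp hi).1
  rcases hj.eq_or_lt with rfl | hj₂
  · exact dvd_mul_of_dvd_left ((pow_dvd_pow 3 (by omega)).trans (hodd i hi₁)) _
  · exact pow_dvd_mul_of_pow_dvd_of_pow_dvd_pow_mul three_ne_zero (hodd i hi₁)
      (three_pow_dvd_three_pow_mul_b i j) (by omega)

-- At `j = 1` the truncated `3 * j - 4` is `0`, so the bound there is `3 ^ α`.
theorem three_pow_dvd_x_even (α : ℕ) :
    ∀ j, 1 ≤ j → (3 : ℤ) ^ (α + (3 * j - 4)) ∣ x (2 * α) j := by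
  induction α with
  | zero =>
    intro j hj
    rcases hj.eq_or_lt with rfl | hj₂
    · simp [x]
    · simp [x, hj₂.ne']
  | succ α ih =>
    exact fun j hj =>
      three_pow_dvd_x_even_succ_of_odd (fun i hi => three_pow_dvd_x_odd_of_even ih hi) hj

theorem x_valuation (α j : ℕ) (hj : 1 ≤ j) :
    (4 ≤ α + 3 * j → (3 : ℤ) ^ (α + 3 * j - 4) ∣ x (2 * α) j) ∧
      (3 : ℤ) ^ (α + 1 + 3 * (j - 1)) ∣ x (2 * α + 1) j :=
  ⟨fun _ => (pow_dvd_pow 3 (by omega)).trans (three_pow_dvd_x_even α j hj),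
    (pow_dvd_pow 3 (by omega)).trans (three_pow_dvd_x_odd_of_even (three_pow_dvd_x_even α) hj)⟩
end
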